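/- Let 𝒱 be a volume-like class of real multivariate polynomials. Let n ∈ ℕ, κ, γ ∈ ℕⁿ with γ ≥ κ componentwise, and let s ∈ ℝ_κ[x₁,…,xₙ] be a homogeneous polynomial. Then the differential operator ∂_s = s(∂_{x₁},…,∂_{xₙ}) maps 𝒱 ∩ ℝ_γ[x₁,…,xₙ] into 𝒱 if and only if N( x^γ · s(x₁^{−1},…,xₙ^{−1}) ) belongs to 𝒱; that is, for s = Σ_{0≤α≤κ} λ_α x^α, ∂_s maps 𝒱 ∩ ℝ_γ[x] into 𝒱 if and only if Σ_α (λ_α/(γ−α)!) x^{γ−α} ∈ 𝒱. -/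

import Mathlib

open MvPolynomial Finset

/-- The composition of iterated partial derivatives `∂^β = ∏ i, ∂_{x i}^{β i}`. -/
noncomputable def pdMulti {σ : Type} [Fintype σ] [DecidableEq σ] (β : σ → ℕ) :
    Module.End ℝ (MvPolynomial σ ℝ) :=
  (Finset.univ.toList.map
    (fun i => ((pderiv i).toLinearMap : Module.End ℝ (MvPolynomial σ ℝ)) ^ β i)).prod

/-- A *volume-like class* of real multivariate polynomials: an assignment, to each finite set
of variables, of a collection of polynomials in those variables that is closed under
(i) products in disjoint sets of variables, (ii) positive scalars, (iii) substitutions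
`x ↦ A x'` with nonnegative matrices `A`, (iv) the operators `Σ_{j≤k} ∂_u^j ∂_v^{k-j}` for
distinct variables `u, v`, and (v) contains all monomials. -/
structure VolumeLikeClass : Type 1 where
  Mem : ∀ {σ : Type} [Fintype σ] [DecidableEq σ], MvPolynomial σ ℝ → Prop
  mem_mul_disjoint : ∀ {σ τ : Type} [Fintype σ] [DecidableEq σ] [Fintype τ] [DecidableEq τ]
      {f : MvPolynomial σ ℝ} {g : MvPolynomial τ ℝ}, Mem f → Mem g →
      Mem (rename Sum.inl f * rename Sum.inr g)
  mem_smul : ∀ {σ : Type} [Fintype σ] [DecidableEq σ] {c : ℝ} {f : MvPolynomial σ ℝ},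
      0 < c → Mem f → Mem (c • f)
  mem_subst : ∀ {σ τ : Type} [Fintype σ] [DecidableEq σ] [Fintype τ] [DecidableEq τ]
      (A : σ → τ → ℝ), (∀ i j, 0 ≤ A i j) → ∀ {f : MvPolynomial σ ℝ}, Mem f →
      Mem (aeval (fun i => ∑ j, C (A i j) * X j) f)
  mem_creationDeriv : ∀ {σ : Type} [Fintype σ] [DecidableEq σ] (u v : σ), u ≠ v → ∀ (k : ℕ)
      {f : MvPolynomial σ ℝ}, Mem f →
      Mem ((∑ j ∈ Finset.range (k + 1),
        ((pderiv u).toLinearMap : Module.End ℝ (MvPolynomial σ ℝ)) ^ j *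
          ((pderiv v).toLinearMap : Module.End ℝ (MvPolynomial σ ℝ)) ^ (k - j)) f)
  mem_monomial : ∀ {σ : Type} [Fintype σ] [DecidableEq σ] (α : σ → ℕ), Mem (∏ i, X i ^ α i)



lemma pd_pow_monomial {σ : Type*} [DecidableEq σ] (u : σ) (k : ℕ) (m : σ →₀ ℕ) (c : ℝ) :
    (((pderiv u).toLinearMap : Module.End ℝ (MvPolynomial σ ℝ)) ^ k) (monomial m c)
      = monomial (m - Finsupp.single u k) (c * (m u).descFactorial k) := by
  induction k generalizing m c with
  | zero => simp
  | succ k ih =>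
    rw [pow_succ, Module.End.mul_apply]
    rw [show (((pderiv u).toLinearMap : Module.End ℝ (MvPolynomial σ ℝ))) (monomial m c) = monomial (m - Finsupp.single u 1) (c * m u) from pderiv_monomial, ih]
    have h1 : ((m - Finsupp.single u 1 : σ →₀ ℕ)) u = m u - 1 := by
      rw [Finsupp.tsub_apply, Finsupp.single_eq_same]
    have h2 : m - Finsupp.single u 1 - Finsupp.single u k = m - Finsupp.single u (k + 1) := by
      rw [tsub_tsub, ← Finsupp.single_add, add_comm]
    rw [h1, h2]
    congr 1
    rcases Nat.eq_zero_or_pos (m u) with h | h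
    · simp [h]
    · obtain ⟨t, ht⟩ := Nat.exists_eq_succ_of_ne_zero h.ne'
      rw [ht, Nat.succ_descFactorial_succ, Nat.succ_sub_one]
      push_cast; ring
open MvPolynomial Finset


lemma list_single_sum_apply_ne {σ : Type*} [DecidableEq σ] (α : σ → ℕ) (L : List σ) (j : σ)
    (hj : j ∉ L) : ((L.map fun i => Finsupp.single i (α i)).sum) j = 0 := by
  induction L with
  | nil => simp
  | cons i L ih =>
    simp only [List.map_cons, List.sum_cons, Finsupp.add_apply]
    rw [Finsupp.single_apply, if_neg (by rintro rfl; exact hj List.mem_cons_self),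
      ih (fun h => hj (List.mem_cons_of_mem _ h)), add_zero]

lemma list_single_sum_apply_mem {σ : Type*} [DecidableEq σ] (α : σ → ℕ) (L : List σ) (j : σ)
    (hL : L.Nodup) (hj : j ∈ L) : ((L.map fun i => Finsupp.single i (α i)).sum) j = α j := by
  induction L with
  | nil => simp at hj
  | cons i L ih =>
    simp only [List.map_cons, List.sum_cons, Finsupp.add_apply]
    rcases List.mem_cons.1 hj with rfl | hj'
    · rw [Finsupp.single_eq_same, list_single_sum_apply_ne _ _ _ (List.nodup_cons.1 hL).1, add_zero]
    · rw [Finsupp.single_apply, if_neg (by rintro rfl; exact (List.nodup_cons.1 hL).1 hj'),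
        ih (List.nodup_cons.1 hL).2 hj', zero_add]

lemma pd_list_monomial {σ : Type*} [DecidableEq σ] (α : σ → ℕ) (L : List σ) (hL : L.Nodup)
    (m : σ →₀ ℕ) (c : ℝ) :
    ((L.map (fun i => ((pderiv i).toLinearMap : Module.End ℝ (MvPolynomial σ ℝ)) ^ α i)).prod)
        (monomial m c)
      = monomial (m - (L.map fun i => Finsupp.single i (α i)).sum)
          (c * (L.map fun i => ((m i).descFactorial (α i) : ℝ)).prod) := by
  induction L with
  | nil => simp
  | cons i L ih =>
    obtain ⟨hi, hL'⟩ := List.nodup_cons.1 hL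
    simp only [List.map_cons, List.prod_cons, List.sum_cons, Module.End.mul_apply]
    rw [ih hL', pd_pow_monomial]
    have h1 : ((m - (L.map fun i => Finsupp.single i (α i)).sum : σ →₀ ℕ)) i = m i := by
      rw [Finsupp.tsub_apply, list_single_sum_apply_ne _ _ _ hi, Nat.sub_zero]
    rw [h1, tsub_tsub, add_comm]
    congr 1
    push_cast
    ring
open MvPolynomial Finset

lemma univ_list_single_sum {σ : Type*} [Fintype σ] [DecidableEq σ] (α : σ → ℕ) :
    ((Finset.univ.toList.map fun i => Finsupp.single i (α i)).sum : σ →₀ ℕ)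
      = Finsupp.equivFunOnFinite.symm α := by
  ext j
  rw [list_single_sum_apply_mem α _ j (Finset.nodup_toList _) (by simp)]
  rfl

lemma pdMulti_monomial {σ : Type} [Fintype σ] [DecidableEq σ] (α : σ → ℕ) (m : σ →₀ ℕ) (c : ℝ) :
    pdMulti α (monomial m c)
      = monomial (m - Finsupp.equivFunOnFinite.symm α)
          (c * ∏ i, ((m i).descFactorial (α i) : ℝ)) := by
  rw [pdMulti, pd_list_monomial α _ (Finset.nodup_toList _), univ_list_single_sum,
    Finset.prod_map_toList]

lemma prod_X_pow_eq {σ : Type*} [Fintype σ] [DecidableEq σ] (δ : σ → ℕ) :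
    (∏ i, (X i : MvPolynomial σ ℝ) ^ δ i)
      = monomial (Finsupp.equivFunOnFinite.symm δ) 1 := by
  rw [monomial_eq, C_1, one_mul, Finsupp.prod_fintype]
  · rfl
  · intro i; exact pow_zero _

noncomputable def subPhi (n : ℕ) : Fin n ⊕ Fin n → MvPolynomial (Fin n) ℝ :=
  Sum.elim X (fun _ => 0)

lemma aeval_subPhi_monomial {n : ℕ} (m : (Fin n ⊕ Fin n) →₀ ℕ) (c : ℝ) :
    aeval (subPhi n) (monomial m c)
      = C (c * ∏ i, (0:ℝ) ^ m (Sum.inr i)) * ∏ i, (X i : MvPolynomial (Fin n) ℝ) ^ m (Sum.inl i) := by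
  rw [aeval_monomial, Finsupp.prod_fintype _ _ (fun u => pow_zero _), Fintype.prod_sum_type]
  have h0 : ∀ i : Fin n, (subPhi n (Sum.inr i)) ^ m (Sum.inr i)
      = C ((0:ℝ) ^ m (Sum.inr i)) := by
    intro i; rw [map_pow, map_zero]; rfl
  have h1 : ∀ i : Fin n, (subPhi n (Sum.inl i)) ^ m (Sum.inl i)
      = (X i : MvPolynomial (Fin n) ℝ) ^ m (Sum.inl i) := fun i => rfl
  simp only [h0, h1, ← map_prod]
  rw [algebraMap_eq, map_mul]
  ring
noncomputable def Eop {n : ℕ} (γ : Fin n → ℕ) (i : Fin n) :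
    Module.End ℝ (MvPolynomial (Fin n ⊕ Fin n) ℝ) :=
  ∑ j ∈ Finset.range (γ i + 1),
    ((pderiv (Sum.inl i)).toLinearMap : Module.End ℝ (MvPolynomial (Fin n ⊕ Fin n) ℝ)) ^ j *
      ((pderiv (Sum.inr i)).toLinearMap : Module.End ℝ (MvPolynomial (Fin n ⊕ Fin n) ℝ)) ^ (γ i - j)

lemma Eop_monomial {n : ℕ} (γ : Fin n → ℕ) (i : Fin n) (m : (Fin n ⊕ Fin n) →₀ ℕ) (c : ℝ) :
    Eop γ i (monomial m c)
      = ∑ j ∈ Finset.range (γ i + 1),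
          monomial (m - Finsupp.single (Sum.inr i) (γ i - j) - Finsupp.single (Sum.inl i) j)
            (c * (m (Sum.inr i)).descFactorial (γ i - j) * (m (Sum.inl i)).descFactorial j) := by
  rw [Eop, LinearMap.sum_apply]
  refine Finset.sum_congr rfl fun j _ => ?_
  rw [Module.End.mul_apply, pd_pow_monomial, pd_pow_monomial]
  have : ((m - Finsupp.single (Sum.inr i) (γ i - j) : (Fin n ⊕ Fin n) →₀ ℕ)) (Sum.inl i)
      = m (Sum.inl i) := by
    rw [Finsupp.tsub_apply, Finsupp.single_apply, if_neg (by simp), Nat.sub_zero]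
  rw [this]
lemma key_lemma {n : ℕ} (γ : Fin n → ℕ) (L : List (Fin n)) :
    L.Nodup → ∀ (m : (Fin n ⊕ Fin n) →₀ ℕ) (c : ℝ), (∀ i ∈ L, m (Sum.inr i) ≤ γ i) →
    aeval (subPhi n) ((L.map (Eop γ)).prod (monomial m c))
      = C (c * ∏ i, (if i ∈ L then ((m (Sum.inl i)).descFactorial (γ i - m (Sum.inr i)) *
            (m (Sum.inr i)).factorial : ℝ) else (0:ℝ) ^ m (Sum.inr i)))
        * ∏ i, (X i : MvPolynomial (Fin n) ℝ) ^
            (if i ∈ L then m (Sum.inl i) - (γ i - m (Sum.inr i)) else m (Sum.inl i)) := by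
  induction L using List.reverseRecOn with
  | nil => intro _ m c _; simpa using aeval_subPhi_monomial m c
  | append_singleton L i ih =>
    intro hL m c hm
    have hiL : i ∉ L := by
      intro h
      exact (List.disjoint_of_nodup_append hL) h (List.mem_singleton_self i)
    have hL' : L.Nodup := (List.nodup_append.1 hL).1
    set k := γ i with hk
    set A := m (Sum.inl i) with hA
    set B := m (Sum.inr i) with hB
    have hBk : B ≤ k := hm i (by simp)
    set mj : ℕ → ((Fin n ⊕ Fin n) →₀ ℕ) := fun j =>
      m - Finsupp.single (Sum.inr i) (k - j) - Finsupp.single (Sum.inl i) j with hmj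
    have f1 : ∀ j, mj j (Sum.inl i) = A - j := by
      intro j
      simp [hmj, Finsupp.tsub_apply, Finsupp.single_apply, hA]
    have f2 : ∀ j, mj j (Sum.inr i) = B - (k - j) := by
      intro j
      simp [hmj, Finsupp.tsub_apply, Finsupp.single_apply, hB]
    have f3 : ∀ j, ∀ i', i' ≠ i → mj j (Sum.inl i') = m (Sum.inl i') := by
      intro j i' hi'
      simp [hmj, Finsupp.tsub_apply, Finsupp.single_apply, hi', Ne.symm hi']
    have f4 : ∀ j, ∀ i', i' ≠ i → mj j (Sum.inr i') = m (Sum.inr i') := by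
      intro j i' hi'
      simp [hmj, Finsupp.tsub_apply, Finsupp.single_apply, hi', Ne.symm hi']
    rw [List.map_append, List.prod_append, List.map_singleton, List.prod_singleton,
      Module.End.mul_apply, Eop_monomial, map_sum, map_sum]
    have hterm : ∀ j ∈ Finset.range (k + 1),
        aeval (subPhi n) ((L.map (Eop γ)).prod
          (monomial (mj j) (c * (B.descFactorial (k - j)) * (A.descFactorial j))))
        = C ((c * (B.descFactorial (k - j)) * (A.descFactorial j)) *
              ∏ i', (if i' ∈ L then ((mj j (Sum.inl i')).descFactorial (γ i' - mj j (Sum.inr i')) *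
                (mj j (Sum.inr i')).factorial : ℝ) else (0:ℝ) ^ mj j (Sum.inr i')))
            * ∏ i', (X i' : MvPolynomial (Fin n) ℝ) ^
                (if i' ∈ L then mj j (Sum.inl i') - (γ i' - mj j (Sum.inr i'))
                  else mj j (Sum.inl i')) := by
      intro j _
      refine ih hL' _ _ ?_
      intro i' hi'
      rw [f4 j i' (fun h => hiL (h ▸ hi'))]
      exact hm i' (by simp [hi'])
    rw [Finset.sum_congr rfl hterm]
    rw [Finset.sum_eq_single_of_mem (k - B) (Finset.mem_range.2 (by omega))]
    · -- the surviving term equals the RHS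
      have e1 : k - (k - B) = B := by omega
      congr 1
      · -- coefficients
        congr 1
        have hW : ∀ i' ∈ Finset.univ.erase i,
            (if i' ∈ L then (((mj (k - B)) (Sum.inl i')).descFactorial
                (γ i' - (mj (k - B)) (Sum.inr i')) *
              ((mj (k - B)) (Sum.inr i')).factorial : ℝ)
              else (0:ℝ) ^ (mj (k - B)) (Sum.inr i'))
            = (if i' ∈ L ++ [i] then ((m (Sum.inl i')).descFactorial (γ i' - m (Sum.inr i')) *
              (m (Sum.inr i')).factorial : ℝ) else (0:ℝ) ^ m (Sum.inr i')) := by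
          intro i' hi'
          have h := (Finset.mem_erase.1 hi').1
          rw [f3 _ _ h, f4 _ _ h, if_congr (by simp [h] : (i' ∈ L) ↔ i' ∈ L ++ [i]) rfl rfl]
        have hrest := Finset.prod_congr rfl hW
        rw [← Finset.mul_prod_erase Finset.univ _ (Finset.mem_univ i), hrest,
          ← Finset.mul_prod_erase Finset.univ
            (fun i' => (if i' ∈ L ++ [i] then ((m (Sum.inl i')).descFactorial
                (γ i' - m (Sum.inr i')) * (m (Sum.inr i')).factorial : ℝ)
              else (0:ℝ) ^ m (Sum.inr i'))) (Finset.mem_univ i),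
          if_neg hiL, if_pos (show i ∈ L ++ [i] by simp), f2, e1, Nat.sub_self, pow_zero,
          Nat.descFactorial_self]
        push_cast
        ring
      · refine Finset.prod_congr rfl fun i' _ => ?_
        by_cases hi' : i' = i
        · subst hi'
          rw [if_neg hiL, if_pos (by simp), f1]
        · rw [f3 _ _ hi', f4 _ _ hi',
            if_congr (by simp [hi'] : (i' ∈ L ++ [i]) ↔ i' ∈ L) rfl rfl]
    · -- other terms vanish
      intro j hj hne
      have hjk : j ≤ k := by have := Finset.mem_range.1 hj; omega
      have hz : ((B.descFactorial (k - j) : ℝ)) * (0:ℝ) ^ (B - (k - j)) = 0 := by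
        rcases lt_or_ge B (k - j) with h | h
        · rw [Nat.descFactorial_eq_zero_iff_lt.2 h]; simp
        · rw [zero_pow (by omega), mul_zero]
      have hcoeff : ((c * (B.descFactorial (k - j)) * (A.descFactorial j)) : ℝ) *
          ∏ i', (if i' ∈ L then ((mj j (Sum.inl i')).descFactorial (γ i' - mj j (Sum.inr i')) *
            (mj j (Sum.inr i')).factorial : ℝ) else (0:ℝ) ^ mj j (Sum.inr i')) = 0 := by
        rw [← Finset.mul_prod_erase Finset.univ _ (Finset.mem_univ i), if_neg hiL, f2]
        calc c * ↑(B.descFactorial (k - j)) * ↑(A.descFactorial j) *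
              ((0:ℝ) ^ (B - (k - j)) * ∏ i' ∈ Finset.univ.erase i,
                (if i' ∈ L then ((mj j (Sum.inl i')).descFactorial (γ i' - mj j (Sum.inr i')) *
                  (mj j (Sum.inr i')).factorial : ℝ) else (0:ℝ) ^ mj j (Sum.inr i')))
            = (↑(B.descFactorial (k - j)) * (0:ℝ) ^ (B - (k - j))) *
              (c * ↑(A.descFactorial j) * ∏ i' ∈ Finset.univ.erase i,
                (if i' ∈ L then ((mj j (Sum.inl i')).descFactorial (γ i' - mj j (Sum.inr i')) *
                  (mj j (Sum.inr i')).factorial : ℝ) else (0:ℝ) ^ mj j (Sum.inr i'))) := by ring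
        _ = 0 := by rw [hz, zero_mul]
      rw [hcoeff, map_zero, zero_mul]
lemma sub_finsupp_eq {n : ℕ} (β : Fin n →₀ ℕ) (α : Fin n → ℕ) :
    β - Finsupp.equivFunOnFinite.symm α
      = Finsupp.equivFunOnFinite.symm (fun i => β i - α i) := by
  ext j
  rw [Finsupp.tsub_apply]
  simp [Finsupp.equivFunOnFinite]
  rfl

lemma main_eq {n : ℕ} (κ γ : Fin n → ℕ) (hκγ : κ ≤ γ) (lam : (Fin n → ℕ) → ℝ)
    (f : MvPolynomial (Fin n) ℝ) :
    aeval (subPhi n) (((Finset.univ.toList.map (Eop γ)).prod)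
      (rename Sum.inl f * rename Sum.inr (∑ α ∈ Finset.Iic κ,
        (lam α / ∏ i, ((γ i - α i).factorial : ℝ)) •
          ∏ i, (X i : MvPolynomial (Fin n) ℝ) ^ (γ i - α i))))
    = (∑ α ∈ Finset.Iic κ, lam α • pdMulti α) f := by
  have hterm : ∀ α ∈ Finset.Iic κ, ∀ (β : Fin n →₀ ℕ) (c : ℝ),
      aeval (subPhi n) (((Finset.univ.toList.map (Eop γ)).prod)
        (monomial (Finsupp.mapDomain Sum.inl β +
          Finsupp.mapDomain Sum.inr (Finsupp.equivFunOnFinite.symm fun i => γ i - α i))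
          (c * (lam α / ∏ i, ((γ i - α i).factorial : ℝ)))))
      = lam α • pdMulti α (monomial β c) := by
    intro α hα β c
    have hαγ : ∀ i, α i ≤ γ i := fun i => le_trans (Finset.mem_Iic.1 hα i) (hκγ i)
    set m := Finsupp.mapDomain Sum.inl β +
      Finsupp.mapDomain Sum.inr (Finsupp.equivFunOnFinite.symm fun i => γ i - α i) with hm
    have hm1 : ∀ i, m (Sum.inl i) = β i := by
      intro i
      rw [hm, Finsupp.add_apply, Finsupp.mapDomain_apply Sum.inl_injective,
        Finsupp.mapDomain_notin_range _ _ (by simp), add_zero]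
    have hm2 : ∀ i, m (Sum.inr i) = γ i - α i := by
      intro i
      rw [hm, Finsupp.add_apply, Finsupp.mapDomain_apply Sum.inr_injective,
        Finsupp.mapDomain_notin_range _ _ (by simp), zero_add]
      simp [Finsupp.equivFunOnFinite]
      rfl
    rw [key_lemma γ _ (Finset.nodup_toList _) _ _
      (fun i _ => by rw [hm2]; exact Nat.sub_le _ _)]
    have hmem : ∀ i : Fin n, i ∈ Finset.univ.toList := fun i => by simp [Finset.mem_toList]
    simp only [if_pos (hmem _), hm1, hm2]
    have hsub : ∀ i : Fin n, γ i - (γ i - α i) = α i := fun i => Nat.sub_sub_self (hαγ i)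
    simp only [hsub]
    rw [pdMulti_monomial, prod_X_pow_eq, C_mul_monomial, smul_monomial, sub_finsupp_eq]
    congr 1
    have hfact : (∏ i, ((γ i - α i).factorial : ℝ)) ≠ 0 :=
      Finset.prod_ne_zero_iff.2 fun i _ => Nat.cast_ne_zero.2 (Nat.factorial_ne_zero _)
    push_cast
    rw [Finset.prod_mul_distrib]
    field_simp
    ring
  -- expand f and g
  conv_lhs => rw [f.as_sum, map_sum]
  rw [map_sum, Finset.sum_mul_sum]
  have hre : ∀ (β : Fin n →₀ ℕ) (α : Fin n → ℕ) (c d : ℝ),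
      (rename Sum.inl (monomial β c) : MvPolynomial (Fin n ⊕ Fin n) ℝ) *
        rename Sum.inr (d • ∏ i, (X i : MvPolynomial (Fin n) ℝ) ^ (γ i - α i))
      = monomial (Finsupp.mapDomain Sum.inl β +
          Finsupp.mapDomain Sum.inr (Finsupp.equivFunOnFinite.symm fun i => γ i - α i)) (c * d) := by
    intro β α c d
    rw [prod_X_pow_eq, smul_monomial, smul_eq_mul, mul_one, rename_monomial, rename_monomial, monomial_mul]
  simp only [hre]
  simp only [map_sum]
  rw [Finset.sum_congr rfl fun β hβ => Finset.sum_congr rfl fun α hα => hterm α hα β (coeff β f)]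
  rw [Finset.sum_comm]
  rw [LinearMap.sum_apply]
  refine Finset.sum_congr rfl fun α hα => ?_
  rw [LinearMap.smul_apply, ← Finset.smul_sum]
  congr 1
  rw [← map_sum, ← f.as_sum]
lemma mem_eop_list_prod (V : VolumeLikeClass) {n : ℕ} (γ : Fin n → ℕ) (L : List (Fin n))
    {p : MvPolynomial (Fin n ⊕ Fin n) ℝ} (hp : V.Mem p) :
    V.Mem ((L.map (Eop γ)).prod p) := by
  induction L with
  | nil => simpa using hp
  | cons i L ih =>
    rw [List.map_cons, List.prod_cons, Module.End.mul_apply]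
    exact V.mem_creationDeriv (Sum.inl i) (Sum.inr i) (by simp) (γ i) ih

def Amat (n : ℕ) : (Fin n ⊕ Fin n) → Fin n → ℝ := fun u j =>
  match u with
  | Sum.inl i => if i = j then 1 else 0
  | Sum.inr _ => 0

lemma Amat_nonneg (n : ℕ) : ∀ u j, 0 ≤ Amat n u j := by
  intro u j
  cases u with
  | inl i => by_cases h : i = j <;> simp [Amat, h]
  | inr i => simp [Amat]

lemma substEq (n : ℕ) :
    (fun u => ∑ j, C (Amat n u j) * X j) = subPhi n := by
  funext u
  cases u with
  | inl i => simp [Amat, subPhi, apply_ite C, ite_mul, Finset.sum_ite_eq]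
  | inr i => simp [Amat, subPhi]


/-- Let `𝒱` be a volume-like class, `κ ≤ γ` componentwise, and let
`s = Σ_{0≤α≤κ} λ_α x^α ∈ ℝ_κ[x₁,…,xₙ]` be homogeneous.  Then the differential operator
`∂_s = s(∂_{x₁},…,∂_{xₙ})` maps `𝒱 ∩ ℝ_γ[x₁,…,xₙ]` into `𝒱` if and only if
`N(x^γ s(x₁⁻¹,…,xₙ⁻¹)) = Σ_α (λ_α/(γ−α)!) x^{γ−α}` belongs to `𝒱`. -/
theorem diffOp_preserves_iff_covolume (V : VolumeLikeClass) (n : ℕ) (κ γ : Fin n → ℕ)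
    (hκγ : κ ≤ γ) (lam : (Fin n → ℕ) → ℝ)
    (hhom : ∃ d : ℕ,
      (∑ α ∈ Finset.Iic κ, lam α • ∏ i, (X i : MvPolynomial (Fin n) ℝ) ^ α i).IsHomogeneous d) :
    (∀ f : MvPolynomial (Fin n) ℝ, V.Mem f → (∀ i, degreeOf i f ≤ γ i) →
        V.Mem ((∑ α ∈ Finset.Iic κ, lam α • pdMulti α) f))
      ↔ V.Mem (∑ α ∈ Finset.Iic κ, (lam α / ∏ i, ((γ i - α i).factorial : ℝ)) •
          ∏ i, (X i : MvPolynomial (Fin n) ℝ) ^ (γ i - α i)) := by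
  constructor
  · intro h
    have hfacpos : (0:ℝ) < ∏ i, ((γ i).factorial : ℝ) :=
      Finset.prod_pos fun i _ => by exact_mod_cast Nat.factorial_pos _
    have hmem : V.Mem ((∏ i, ((γ i).factorial : ℝ))⁻¹ •
        ∏ i, (X i : MvPolynomial (Fin n) ℝ) ^ γ i) :=
      V.mem_smul (inv_pos.2 hfacpos) (V.mem_monomial γ)
    have hdeg : ∀ i, degreeOf i ((∏ i, ((γ i).factorial : ℝ))⁻¹ •
        ∏ i, (X i : MvPolynomial (Fin n) ℝ) ^ γ i) ≤ γ i := by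
      intro i
      rw [smul_eq_C_mul]
      refine le_trans (degreeOf_C_mul_le _ _ _) ?_
      rw [prod_X_pow_eq]
      refine degreeOf_le_iff.2 fun d hd => ?_
      have hs := support_monomial_subset hd
      rw [Finset.mem_singleton] at hs
      subst hs
      exact le_of_eq rfl
    have hcalc : (∑ α ∈ Finset.Iic κ, lam α • pdMulti α) ((∏ i, ((γ i).factorial : ℝ))⁻¹ •
          ∏ i, (X i : MvPolynomial (Fin n) ℝ) ^ γ i)
        = ∑ α ∈ Finset.Iic κ, (lam α / ∏ i, ((γ i - α i).factorial : ℝ)) •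
          ∏ i, (X i : MvPolynomial (Fin n) ℝ) ^ (γ i - α i) := by
      rw [LinearMap.sum_apply]
      refine Finset.sum_congr rfl fun α hα => ?_
      have hαγ : ∀ i, α i ≤ γ i := fun i => le_trans (Finset.mem_Iic.1 hα i) (hκγ i)
      rw [LinearMap.smul_apply, map_smul, prod_X_pow_eq γ, pdMulti_monomial,
        prod_X_pow_eq (fun i => γ i - α i), smul_monomial, smul_monomial, smul_monomial,
        sub_finsupp_eq]
      simp only [Finsupp.coe_equivFunOnFinite_symm, smul_eq_mul]
      congr 1
      have key : (∏ i, ((γ i - α i).factorial : ℝ)) * ∏ i, (((γ i).descFactorial (α i) : ℝ))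
          = ∏ i, ((γ i).factorial : ℝ) := by
        rw [← Finset.prod_mul_distrib]
        refine Finset.prod_congr rfl fun i _ => ?_
        rw [← Nat.cast_mul, Nat.factorial_mul_descFactorial (hαγ i)]
      have h2 : (∏ i, ((γ i - α i).factorial : ℝ)) ≠ 0 :=
        ne_of_gt (Finset.prod_pos fun i _ => by exact_mod_cast Nat.factorial_pos _)
      have h3 : (∏ i, ((γ i).factorial : ℝ)) ≠ 0 := ne_of_gt hfacpos
      field_simp
      linear_combination lam α * key
    rw [← hcalc]
    exact h _ hmem hdeg
  · intro hg f hf _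
    have h1 := V.mem_mul_disjoint hf hg
    have h2 := mem_eop_list_prod V γ Finset.univ.toList h1
    have h3 := V.mem_subst (Amat n) (Amat_nonneg n) h2
    rw [substEq] at h3
    rwa [main_eq κ γ hκγ lam f] at h3
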